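/- arXiv:2403.14713 — 3 statements merged into one kernel-verified Lean document; each statement's English description precedes it below -/
import Mathlib

section
/- Suppose T, Y₀ ∈ {0,1} are random variables, X a random variable, and D ∈ {0,1}, satisfying: (i) T ⫫ Y₀ | X, D=1 (no unmeasured confounding), (ii) on D=0 the observed outcome Y equals Y₀, (iii) X ⫫ D | Y₀ = 1. Then P(T=1 | Y₀=1, D=1) = E[P(T=1 | X, D=1) | Y=1, D=0]. -/
open MeasureTheory

/-- Conditional probability `P(A | B) = P(A ∩ B) / P(B)` as a real number. -/
noncomputable def condP {Ω : Type*} [MeasurableSpace Ω] (μ : Measure Ω) (A B : Set Ω) : ℝ :=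
  (μ (A ∩ B)).toReal / (μ B).toReal

lemma condP_def {Ω : Type*} [MeasurableSpace Ω] (μ : Measure Ω) (A B : Set Ω) :
    condP μ A B = (μ (A ∩ B)).toReal / (μ B).toReal := rfl

lemma aux_ident {Ω ι : Type*} [MeasurableSpace Ω] [Fintype ι]
    (μ : Measure Ω) [IsProbabilityMeasure μ]
    (T1 Y1 D1 D0 : Set Ω) (A : ι → Set Ω)
    (mT1 : MeasurableSet T1) (mY1 : MeasurableSet Y1) (mD1 : MeasurableSet D1)
    (mA : ∀ x, MeasurableSet (A x))
    (hdisj : Pairwise (Function.onFun Disjoint A))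
    (hcov : (⋃ x, A x) = Set.univ)
    (hNUC : ∀ x, condP μ (T1 ∩ Y1) (A x ∩ D1) =
      condP μ T1 (A x ∩ D1) * condP μ Y1 (A x ∩ D1))
    (hCS1 : ∀ x, condP μ (A x ∩ D1) Y1 = condP μ (A x) Y1 * condP μ D1 Y1)
    (hCS0 : ∀ x, condP μ (A x ∩ D0) Y1 = condP μ (A x) Y1 * condP μ D0 Y1)
    (hpos1 : 0 < μ (Y1 ∩ D1)) (hpos0 : 0 < μ (Y1 ∩ D0)) (hposY : 0 < μ Y1)
    (hposx : ∀ x, 0 < μ (A x ∩ D1)) :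
    condP μ T1 (Y1 ∩ D1) =
      ∑ x : ι, condP μ T1 (A x ∩ D1) * condP μ (A x) (Y1 ∩ D0) := by
  have y_pos : 0 < (μ Y1).toReal := ENNReal.toReal_pos hposY.ne' (measure_ne_top μ _)
  have b1_pos : 0 < (μ (Y1 ∩ D1)).toReal := ENNReal.toReal_pos hpos1.ne' (measure_ne_top μ _)
  have b0_pos : 0 < (μ (Y1 ∩ D0)).toReal := ENNReal.toReal_pos hpos0.ne' (measure_ne_top μ _)
  have a_pos : ∀ x, 0 < (μ (A x ∩ D1)).toReal := fun x =>
    ENNReal.toReal_pos (hposx x).ne' (measure_ne_top μ _)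
  -- partition by A
  have hpart : ∀ S : Set Ω, MeasurableSet S →
      (μ S).toReal = ∑ x, (μ (S ∩ A x)).toReal := by
    intro S hS
    have h1 : S = ⋃ x, S ∩ A x := by
      rw [← Set.inter_iUnion, hcov, Set.inter_univ]
    have h2 : μ (⋃ x, S ∩ A x) = ∑' x, μ (S ∩ A x) :=
      measure_iUnion (hdisj.mono fun i j h => h.mono Set.inter_subset_right
        Set.inter_subset_right) (fun x => hS.inter (mA x))
    have h3 : μ S = ∑' x, μ (S ∩ A x) := by
      conv_lhs => rw [h1]
      exact h2
    rw [h3, tsum_fintype, ENNReal.toReal_sum (fun x _ => measure_ne_top μ _)]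
  -- covariate stability consequence
  have stab : ∀ (x : ι) (Dj : Set Ω),
      condP μ (A x ∩ Dj) Y1 = condP μ (A x) Y1 * condP μ Dj Y1 →
      0 < (μ (Y1 ∩ Dj)).toReal →
      condP μ (A x) (Y1 ∩ Dj) = condP μ (A x) Y1 := by
    intro x Dj h hj
    simp only [condP_def] at h ⊢
    have hswap1 : A x ∩ (Y1 ∩ Dj) = (A x ∩ Dj) ∩ Y1 := by
      ext ω; simp only [Set.mem_inter_iff]; tauto
    have hswap2 : μ (Dj ∩ Y1) = μ (Y1 ∩ Dj) := by rw [Set.inter_comm]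
    rw [hswap2] at h
    rw [hswap1]
    set p := (μ (A x ∩ Dj ∩ Y1)).toReal
    set q := (μ (A x ∩ Y1)).toReal
    set c := (μ (Y1 ∩ Dj)).toReal
    set y := (μ Y1).toReal
    field_simp at h ⊢
    nlinarith [h, hj, y_pos]
  have stab1 : ∀ x, condP μ (A x) (Y1 ∩ D1) = condP μ (A x) Y1 := fun x =>
    stab x D1 (hCS1 x) b1_pos
  have stab0 : ∀ x, condP μ (A x) (Y1 ∩ D0) = condP μ (A x) Y1 := fun x =>
    stab x D0 (hCS0 x) b0_pos
  -- NUC consequence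
  have key : ∀ x, (μ ((T1 ∩ Y1) ∩ (A x ∩ D1))).toReal =
      condP μ T1 (A x ∩ D1) * (μ (Y1 ∩ (A x ∩ D1))).toReal := by
    intro x
    have h := hNUC x
    simp only [condP_def] at h ⊢
    have ha := (a_pos x).ne'
    rw [div_eq_iff ha] at h
    rw [h]
    field_simp
  -- assemble
  have hnum : (μ (T1 ∩ (Y1 ∩ D1))).toReal =
      ∑ x, condP μ T1 (A x ∩ D1) * (μ (A x ∩ (Y1 ∩ D1))).toReal := by
    rw [hpart _ (mT1.inter (mY1.inter mD1))]
    refine Finset.sum_congr rfl fun x _ => ?_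
    have e1 : T1 ∩ (Y1 ∩ D1) ∩ A x = (T1 ∩ Y1) ∩ (A x ∩ D1) := by
      ext ω; simp only [Set.mem_inter_iff]; tauto
    have e2 : Y1 ∩ (A x ∩ D1) = A x ∩ (Y1 ∩ D1) := by
      ext ω; simp only [Set.mem_inter_iff]; tauto
    rw [e1, key x, e2]
  calc condP μ T1 (Y1 ∩ D1)
      = (μ (T1 ∩ (Y1 ∩ D1))).toReal / (μ (Y1 ∩ D1)).toReal := rfl
    _ = ∑ x, condP μ T1 (A x ∩ D1) *
          ((μ (A x ∩ (Y1 ∩ D1))).toReal / (μ (Y1 ∩ D1)).toReal) := by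
        rw [hnum, Finset.sum_div]
        exact Finset.sum_congr rfl fun x _ => by ring
    _ = ∑ x : ι, condP μ T1 (A x ∩ D1) * condP μ (A x) (Y1 ∩ D0) := by
        refine Finset.sum_congr rfl fun x _ => ?_
        have : (μ (A x ∩ (Y1 ∩ D1))).toReal / (μ (Y1 ∩ D1)).toReal
            = condP μ (A x) (Y1 ∩ D1) := rfl
        rw [this, stab1 x, ← stab0 x]

/-- Identification under no unmeasured confounding, consistency, and covariate stability:
`P(T=1 | Y₀=1, D=1) = E[P(T=1 | X, D=1) | Y=1, D=0]`. -/
theorem identification_under_strong_assumptions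
    {Ω ι : Type*} [MeasurableSpace Ω] [Fintype ι]
    (μ : Measure Ω) [IsProbabilityMeasure μ]
    (T Y0 Y D : Ω → ℕ) (X : Ω → ι)
    (hTm : Measurable T) (hY0m : Measurable Y0) (hYm : Measurable Y) (hDm : Measurable D)
    (hXm : ∀ x : ι, MeasurableSet {ω | X ω = x})
    (hTbin : ∀ ω, T ω = 0 ∨ T ω = 1)
    (hY0bin : ∀ ω, Y0 ω = 0 ∨ Y0 ω = 1)
    (hDbin : ∀ ω, D ω = 0 ∨ D ω = 1)
    -- (i) no unmeasured confounding: T ⫫ Y₀ | X, D = 1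
    (hNUC : ∀ (x : ι) (k i : ℕ),
      condP μ ({ω | T ω = k} ∩ {ω | Y0 ω = i}) ({ω | X ω = x} ∩ {ω | D ω = 1}) =
        condP μ {ω | T ω = k} ({ω | X ω = x} ∩ {ω | D ω = 1}) *
          condP μ {ω | Y0 ω = i} ({ω | X ω = x} ∩ {ω | D ω = 1}))
    -- (ii) consistency: on D = 0 the observed outcome Y equals Y₀
    (hcons : ∀ ω, D ω = 0 → Y ω = Y0 ω)
    -- (iii) covariate stability: X ⫫ D | Y₀ = 1
    (hCS : ∀ (x : ι) (j : ℕ),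
      condP μ ({ω | X ω = x} ∩ {ω | D ω = j}) {ω | Y0 ω = 1} =
        condP μ {ω | X ω = x} {ω | Y0 ω = 1} * condP μ {ω | D ω = j} {ω | Y0 ω = 1})
    -- positivity of the relevant conditioning events
    (hpos1 : 0 < μ ({ω | Y0 ω = 1} ∩ {ω | D ω = 1}))
    (hpos0 : 0 < μ ({ω | Y ω = 1} ∩ {ω | D ω = 0}))
    (hposY : 0 < μ {ω | Y0 ω = 1})
    (hposx : ∀ x : ι, 0 < μ ({ω | X ω = x} ∩ {ω | D ω = 1})) :
    condP μ {ω | T ω = 1} ({ω | Y0 ω = 1} ∩ {ω | D ω = 1}) =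
      ∑ x : ι, condP μ {ω | T ω = 1} ({ω | X ω = x} ∩ {ω | D ω = 1}) *
        condP μ {ω | X ω = x} ({ω | Y ω = 1} ∩ {ω | D ω = 0}) := by
  have hYD0 : {ω | Y ω = 1} ∩ {ω | D ω = 0} = {ω | Y0 ω = 1} ∩ {ω | D ω = 0} := by
    ext ω
    simp only [Set.mem_inter_iff, Set.mem_setOf_eq]
    constructor
    · rintro ⟨h1, h2⟩; exact ⟨(hcons ω h2) ▸ h1, h2⟩
    · rintro ⟨h1, h2⟩; exact ⟨(hcons ω h2).symm ▸ h1, h2⟩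
  rw [hYD0]
  refine aux_ident μ {ω | T ω = 1} {ω | Y0 ω = 1} {ω | D ω = 1} {ω | D ω = 0}
    (fun x => {ω | X ω = x})
    (hTm (measurableSet_singleton 1)) (hY0m (measurableSet_singleton 1))
    (hDm (measurableSet_singleton 1)) hXm ?_ ?_
    (fun x => hNUC x 1 1) (fun x => hCS x 1) (fun x => hCS x 0)
    hpos1 (by rw [← hYD0]; exact hpos0) hposY hposx
  · intro i j hij
    refine Set.disjoint_left.mpr ?_
    rintro ω h1 h2
    simp only [Set.mem_setOf_eq] at h1 h2
    exact hij (h1 ▸ h2 ▸ rfl)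
  · ext ω
    simp only [Set.mem_iUnion, Set.mem_setOf_eq, Set.mem_univ, iff_true]
    exact ⟨X ω, rfl⟩
end

section
/- Suppose for all x, P(Y₀=1 | D=1, X=x) > 0, Y₀ ⫫ D | X, and X ⫫ D | Y₀=1. Then P(T=1 | Y₀=1, D=1) ≤ E[ min{1, P(T=1 | D=1, X) / P(Y₀=1 | D=0, X)} | Y₀=1, D=0 ], where Y₀ is observed as Y on D=0. -/
open MeasureTheory

section

variable {Ω ι : Type*} [MeasurableSpace Ω] (μ : Measure Ω)

/-- `S` need not be measurable: only the fibres of `X` are. -/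
lemma measure_eq_sum_inter_fiber [Fintype ι] (X : Ω → ι)
    (hX : ∀ x : ι, MeasurableSet {ω | X ω = x}) (S : Set Ω) :
    μ S = ∑ x : ι, μ (S ∩ {ω | X ω = x}) := by
  have hcover : ⋃ x : ι, {ω | X ω = x} = Set.univ :=
    Set.iUnion_eq_univ_iff.2 fun ω => ⟨X ω, rfl⟩
  have hdisj : Pairwise (Function.onFun Disjoint fun x : ι => {ω | X ω = x}) :=
    fun _ _ hxy => Set.disjoint_left.2 fun _ hx hy => hxy (hx.symm.trans hy)
  calc μ S = μ.restrict (⋃ x : ι, {ω | X ω = x}) S := by rw [hcover, Measure.restrict_univ]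
    _ = ∑ x : ι, μ (S ∩ {ω | X ω = x}) := by
      rw [Measure.restrict_iUnion hdisj hX, Measure.sum_apply_of_countable, tsum_fintype]
      simp only [Measure.restrict_apply' (hX _)]

variable [IsFiniteMeasure μ]

lemma condP_eq_sum_inter_fiber [Fintype ι] (X : Ω → ι)
    (hX : ∀ x : ι, MeasurableSet {ω | X ω = x}) (A B : Set Ω) :
    condP μ A B = ∑ x : ι, condP μ (A ∩ {ω | X ω = x}) B := by
  simp only [condP, ← Finset.sum_div]
  rw [measure_eq_sum_inter_fiber μ X hX, ENNReal.toReal_sum fun _ _ => measure_ne_top μ _]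
  congr 1
  refine Finset.sum_congr rfl fun x _ => ?_
  rw [Set.inter_right_comm]

lemma condP_inter_eq_of_condIndep {A B C : Set Ω}
    (hindep : condP μ (A ∩ B) C = condP μ A C * condP μ B C) (hBC : μ (B ∩ C) ≠ 0) :
    condP μ A (B ∩ C) = condP μ A C := by
  have hBC' : 0 < (μ (B ∩ C)).toReal := ENNReal.toReal_pos hBC (measure_ne_top μ _)
  have hC : 0 < (μ C).toReal := hBC'.trans_le <|
    ENNReal.toReal_mono (measure_ne_top μ _) (measure_mono Set.inter_subset_right)
  unfold condP at hindep ⊢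
  rw [Set.inter_assoc] at hindep
  field_simp at hindep ⊢
  linear_combination hindep

/-- The Fréchet bound `P(A ∩ B | E ∩ F) ≤ min (P(A | E ∩ F), P(B | E ∩ F))`, rescaled from
`E ∩ F` to `B ∩ E`. -/
lemma condP_inter_le_min_mul (A B E F : Set Ω) :
    condP μ (A ∩ F) (B ∩ E) ≤
      min 1 (condP μ A (E ∩ F) / condP μ B (E ∩ F)) * condP μ F (B ∩ E) := by
  set m : Set Ω → ℝ := fun S => (μ S).toReal
  have mono : ∀ {S U : Set Ω}, S ⊆ U → m S ≤ m U := fun h =>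
    ENNReal.toReal_mono (measure_ne_top μ _) (measure_mono h)
  have hF : F ∩ (B ∩ E) = B ∩ (E ∩ F) := by
    rw [Set.inter_comm, Set.inter_assoc]
  have hfrechet : m (A ∩ F ∩ (B ∩ E)) ≤ min (m (B ∩ (E ∩ F))) (m (A ∩ (E ∩ F))) :=
    le_min (mono fun ω h => ⟨h.2.1, h.2.2, h.1.2⟩) (mono fun ω h => ⟨h.1.1, h.2.2, h.1.2⟩)
  have hratio : condP μ A (E ∩ F) / condP μ B (E ∩ F) = m (A ∩ (E ∩ F)) / m (B ∩ (E ∩ F)) := by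
    rcases eq_or_ne (m (E ∩ F)) 0 with hEF | hEF
    · have hA : m (A ∩ (E ∩ F)) = 0 :=
        le_antisymm (hEF ▸ mono Set.inter_subset_right) ENNReal.toReal_nonneg
      simp only [condP, m] at hEF hA ⊢
      simp [hEF, hA]
    · exact div_div_div_cancel_right₀ hEF _ _
  have hmin : min 1 (m (A ∩ (E ∩ F)) / m (B ∩ (E ∩ F))) * m (B ∩ (E ∩ F)) =
      min (m (B ∩ (E ∩ F))) (m (A ∩ (E ∩ F))) := by
    rcases eq_or_ne (m (B ∩ (E ∩ F))) 0 with hB | hB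
    · simp [m, hB]
    · rw [min_mul_of_nonneg _ _ ENNReal.toReal_nonneg, one_mul, div_mul_cancel₀ _ hB]
  rw [hratio]
  unfold condP
  rw [hF, ← mul_div_assoc]
  exact div_le_div_of_nonneg_right (hfrechet.trans_eq hmin.symm) ENNReal.toReal_nonneg

end

theorem partial_identification_upper_bound_general
    {Ω ι : Type*} [MeasurableSpace Ω] [Fintype ι]
    (μ : Measure Ω) [IsProbabilityMeasure μ]
    (T Y0 D : Ω → ℕ) (X : Ω → ι)
    (hXm : ∀ x : ι, MeasurableSet {ω | X ω = x})
    -- stable baseline risk: Y₀ ⫫ D | X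
    (hSBR : ∀ (x : ι) (i j : ℕ),
      condP μ ({ω | Y0 ω = i} ∩ {ω | D ω = j}) {ω | X ω = x} =
        condP μ {ω | Y0 ω = i} {ω | X ω = x} * condP μ {ω | D ω = j} {ω | X ω = x})
    -- covariate stability: X ⫫ D | Y₀ = 1
    (hCS : ∀ (x : ι) (j : ℕ),
      condP μ ({ω | X ω = x} ∩ {ω | D ω = j}) {ω | Y0 ω = 1} =
        condP μ {ω | X ω = x} {ω | Y0 ω = 1} * condP μ {ω | D ω = j} {ω | Y0 ω = 1})
    (hpos1 : 0 < μ ({ω | Y0 ω = 1} ∩ {ω | D ω = 1}))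
    (hpos0 : 0 < μ ({ω | Y0 ω = 1} ∩ {ω | D ω = 0}))
    (hposx1 : ∀ x : ι, 0 < μ ({ω | D ω = 1} ∩ {ω | X ω = x}))
    (hposx0 : ∀ x : ι, 0 < μ ({ω | D ω = 0} ∩ {ω | X ω = x})) :
    condP μ {ω | T ω = 1} ({ω | Y0 ω = 1} ∩ {ω | D ω = 1}) ≤
      ∑ x : ι, min 1
          (condP μ {ω | T ω = 1} ({ω | D ω = 1} ∩ {ω | X ω = x}) /
            condP μ {ω | Y0 ω = 1} ({ω | D ω = 0} ∩ {ω | X ω = x})) *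
        condP μ {ω | X ω = x} ({ω | Y0 ω = 1} ∩ {ω | D ω = 0}) := by
  set Y := {ω | Y0 ω = 1}
  set D1 := {ω | D ω = 1}
  set D0 := {ω | D ω = 0}
  have hbaseline : ∀ x : ι, condP μ Y (D0 ∩ {ω | X ω = x}) = condP μ Y (D1 ∩ {ω | X ω = x}) :=
    fun x => by
      rw [condP_inter_eq_of_condIndep μ (hSBR x 1 0) (hposx0 x).ne',
        condP_inter_eq_of_condIndep μ (hSBR x 1 1) (hposx1 x).ne']
  have hcovariate : ∀ x : ι, condP μ {ω | X ω = x} (Y ∩ D0) = condP μ {ω | X ω = x} (Y ∩ D1) :=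
    fun x => by
      rw [Set.inter_comm Y, Set.inter_comm Y,
        condP_inter_eq_of_condIndep μ (hCS x 0) (by rw [Set.inter_comm]; exact hpos0.ne'),
        condP_inter_eq_of_condIndep μ (hCS x 1) (by rw [Set.inter_comm]; exact hpos1.ne')]
  rw [condP_eq_sum_inter_fiber μ X hXm]
  refine Finset.sum_le_sum fun x _ => ?_
  rw [hbaseline, hcovariate]
  exact condP_inter_le_min_mul μ _ _ _ _

/-- Upper bound under arbitrary unmeasured confounding:
`P(T=1 | Y₀=1, D=1) ≤ E[min{1, P(T=1|D=1,X)/P(Y₀=1|D=0,X)} | Y₀=1, D=0]`. -/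
theorem partial_identification_upper_bound
    {Ω ι : Type*} [MeasurableSpace Ω] [Fintype ι]
    (μ : Measure Ω) [IsProbabilityMeasure μ]
    (T Y0 D : Ω → ℕ) (X : Ω → ι)
    (hTm : Measurable T) (hY0m : Measurable Y0) (hDm : Measurable D)
    (hXm : ∀ x : ι, MeasurableSet {ω | X ω = x})
    (hTbin : ∀ ω, T ω = 0 ∨ T ω = 1)
    (hY0bin : ∀ ω, Y0 ω = 0 ∨ Y0 ω = 1)
    (hDbin : ∀ ω, D ω = 0 ∨ D ω = 1)
    -- stable baseline risk: Y₀ ⫫ D | X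
    (hSBR : ∀ (x : ι) (i j : ℕ),
      condP μ ({ω | Y0 ω = i} ∩ {ω | D ω = j}) {ω | X ω = x} =
        condP μ {ω | Y0 ω = i} {ω | X ω = x} * condP μ {ω | D ω = j} {ω | X ω = x})
    -- covariate stability: X ⫫ D | Y₀ = 1
    (hCS : ∀ (x : ι) (j : ℕ),
      condP μ ({ω | X ω = x} ∩ {ω | D ω = j}) {ω | Y0 ω = 1} =
        condP μ {ω | X ω = x} {ω | Y0 ω = 1} * condP μ {ω | D ω = j} {ω | Y0 ω = 1})
    -- positivity: P(Y₀ = 1 | D = 1, X = x) > 0 and well-definedness of conditionals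
    (hposY1 : ∀ x : ι, 0 < condP μ {ω | Y0 ω = 1} ({ω | D ω = 1} ∩ {ω | X ω = x}))
    (hposY0 : ∀ x : ι, 0 < condP μ {ω | Y0 ω = 1} ({ω | D ω = 0} ∩ {ω | X ω = x}))
    (hpos1 : 0 < μ ({ω | Y0 ω = 1} ∩ {ω | D ω = 1}))
    (hpos0 : 0 < μ ({ω | Y0 ω = 1} ∩ {ω | D ω = 0}))
    (hposY : 0 < μ {ω | Y0 ω = 1})
    (hposx1 : ∀ x : ι, 0 < μ ({ω | D ω = 1} ∩ {ω | X ω = x}))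
    (hposx0 : ∀ x : ι, 0 < μ ({ω | D ω = 0} ∩ {ω | X ω = x}))
    (hposx : ∀ x : ι, 0 < μ {ω | X ω = x}) :
    condP μ {ω | T ω = 1} ({ω | Y0 ω = 1} ∩ {ω | D ω = 1}) ≤
      ∑ x : ι, min 1
          (condP μ {ω | T ω = 1} ({ω | D ω = 1} ∩ {ω | X ω = x}) /
            condP μ {ω | Y0 ω = 1} ({ω | D ω = 0} ∩ {ω | X ω = x})) *
        condP μ {ω | X ω = x} ({ω | Y0 ω = 1} ∩ {ω | D ω = 0}) :=
  partial_identification_upper_bound_general μ T Y0 D X hXm hSBR hCS hpos1 hpos0 hposx1 hposx0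
end

section
/- Suppose for all x, P(Y₀=1 | D=1, X=x) > 0, Y₀ ⫫ D | X, and X ⫫ D | Y₀=1. Then P(T=1 | Y₀=1, D=1) ≥ E[ max{0, (P(T=1 | D=1, X) + P(Y₀=1 | D=0, X) − 1) / P(Y₀=1 | D=0, X)} | Y₀=1, D=0 ]. -/
/-!
Within each stratum `X = x`, Fréchet's inequality `P(A ∩ B) ≥ P(A) + P(B) - 1` bounds
`P(T=1 | Y₀=1, D=1, X=x)` from below by `(P(T=1 | D=1, X=x) + c(x) - 1) / c(x)` with
`c(x) = P(Y₀=1 | D=1, X=x)`. Stable baseline risk replaces `c(x)` by `P(Y₀=1 | D=0, X=x)`, and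
covariate stability makes the law of `X` given `Y₀=1, D=0` equal to that given `Y₀=1, D=1`, so
averaging the stratum bounds over it and applying the law of total probability gives the claim.
-/

open MeasureTheory

open Set

section CondP

variable {Ω : Type*} [MeasurableSpace Ω] {μ : Measure Ω} {A B C E : Set Ω}

lemma condP_eq_measureReal_div : condP μ A B = μ.real (A ∩ B) / μ.real B := rfl

lemma condP_nonneg : 0 ≤ condP μ A B := div_nonneg measureReal_nonneg measureReal_nonneg

lemma measure_inter_ne_zero_of_condP_pos (h : 0 < condP μ A B) : μ (A ∩ B) ≠ 0 := by
  intro h0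
  simp [condP, h0] at h

variable [IsFiniteMeasure μ]

lemma condP_inter_eq_of_indep (hindep : condP μ (A ∩ C) B = condP μ A B * condP μ C B)
    (hCB : μ (C ∩ B) ≠ 0) : condP μ A (C ∩ B) = condP μ A B := by
  have hCB' : 0 < μ.real (C ∩ B) := ENNReal.toReal_pos hCB (measure_ne_top μ _)
  have hB : 0 < μ.real B := hCB'.trans_le (measureReal_mono inter_subset_right)
  simp only [condP_eq_measureReal_div, inter_assoc] at hindep ⊢
  field_simp at hindep
  rw [div_eq_div_iff hCB'.ne' hB.ne', hindep]

lemma condP_mul_condP : condP μ A (C ∩ B) * condP μ C B = condP μ (A ∩ C) B := by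
  simp only [condP_eq_measureReal_div]
  by_cases h : μ.real (C ∩ B) = 0
  · have : μ.real (A ∩ C ∩ B) = 0 :=
      measureReal_mono_null (by rw [inter_assoc]; exact inter_subset_right) h
    simp [h, this]
  · rw [inter_assoc]
    field_simp

lemma measureReal_inter_add_measureReal_inter_le (hB : MeasurableSet B) :
    μ.real (A ∩ E) + μ.real (B ∩ E) ≤ μ.real (A ∩ B ∩ E) + μ.real E := by
  have hAE := measureReal_inter_add_sdiff (μ := μ) (s := A ∩ E) hB
  have hE := measureReal_inter_add_sdiff (μ := μ) (s := E) hB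
  have hsub : μ.real ((A ∩ E) \ B) ≤ μ.real (E \ B) :=
    measureReal_mono (sdiff_subset_sdiff_left inter_subset_right)
  rw [inter_right_comm] at hAE
  rw [inter_comm E] at hE
  linarith

lemma condP_add_condP_le (hB : MeasurableSet B) :
    condP μ A E + condP μ B E ≤ condP μ (A ∩ B) E + 1 := by
  simp only [condP_eq_measureReal_div]
  rcases (measureReal_nonneg (μ := μ) (s := E)).eq_or_lt with hE | hE
  · simp [← hE]
  · rw [← add_div, div_add_one hE.ne', div_le_div_iff_of_pos_right hE]
    exact measureReal_inter_add_measureReal_inter_le hB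

lemma frechet_div_le_condP (hB : MeasurableSet B) :
    max 0 ((condP μ A E + condP μ B E - 1) / condP μ B E) ≤ condP μ A (B ∩ E) := by
  refine max_le condP_nonneg ?_
  rcases (condP_nonneg (μ := μ) (A := B) (B := E)).eq_or_lt with hBE | hBE
  · simp [← hBE, condP_nonneg]
  · calc (condP μ A E + condP μ B E - 1) / condP μ B E
        ≤ condP μ (A ∩ B) E / condP μ B E := by
          gcongr
          linarith [condP_add_condP_le (μ := μ) (A := A) (E := E) hB]
      _ = condP μ A (B ∩ E) := by
          rw [← condP_mul_condP]
          field_simp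

lemma sum_condP_inter_fiber {ι : Type*} [Fintype ι] (X : Ω → ι)
    (hX : ∀ x, MeasurableSet {ω | X ω = x}) (A B : Set Ω) :
    ∑ x, condP μ (A ∩ {ω | X ω = x}) B = condP μ A B := by
  simp only [condP_eq_measureReal_div, ← Finset.sum_div]
  congr 1
  have hfib := sum_measureReal_preimage_singleton (μ := μ.restrict (A ∩ B)) Finset.univ
    (f := X) fun x _ => hX x
  simp only [Finset.coe_univ, preimage_univ, measureReal_restrict_apply_univ] at hfib
  rw [← hfib]
  exact Finset.sum_congr rfl fun x _ =>
    (congrArg μ.real (by rw [inter_right_comm, inter_comm])).trans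
      (measureReal_restrict_apply (hX x)).symm

lemma frechet_bound_mul_condP_le {D₀ D₁ F : Set Ω} (hB : MeasurableSet B)
    (hrisk : condP μ B (D₀ ∩ F) = condP μ B (D₁ ∩ F))
    (hcov : condP μ F (B ∩ D₀) = condP μ F (B ∩ D₁)) :
    max 0 ((condP μ A (D₁ ∩ F) + condP μ B (D₀ ∩ F) - 1) / condP μ B (D₀ ∩ F)) *
        condP μ F (B ∩ D₀) ≤ condP μ (A ∩ F) (B ∩ D₁) := by
  rw [hrisk, hcov]
  calc _ ≤ condP μ A (B ∩ (D₁ ∩ F)) * condP μ F (B ∩ D₁) := by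
        gcongr
        · exact condP_nonneg
        · exact frechet_div_le_condP hB
    _ = condP μ (A ∩ F) (B ∩ D₁) := by
        rw [← condP_mul_condP, ← inter_assoc, inter_comm]

end CondP

theorem partial_identification_lower_bound_general
    {Ω ι : Type*} [MeasurableSpace Ω] [Fintype ι]
    (μ : Measure Ω) [IsProbabilityMeasure μ]
    (T Y0 D : Ω → ℕ) (X : Ω → ι)
    (hY0m : Measurable Y0)
    (hXm : ∀ x : ι, MeasurableSet {ω | X ω = x})
    -- stable baseline risk: Y₀ ⫫ D | X
    (hSBR : ∀ (x : ι) (i j : ℕ),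
      condP μ ({ω | Y0 ω = i} ∩ {ω | D ω = j}) {ω | X ω = x} =
        condP μ {ω | Y0 ω = i} {ω | X ω = x} * condP μ {ω | D ω = j} {ω | X ω = x})
    -- covariate stability: X ⫫ D | Y₀ = 1
    (hCS : ∀ (x : ι) (j : ℕ),
      condP μ ({ω | X ω = x} ∩ {ω | D ω = j}) {ω | Y0 ω = 1} =
        condP μ {ω | X ω = x} {ω | Y0 ω = 1} * condP μ {ω | D ω = j} {ω | Y0 ω = 1})
    -- positivity: P(Y₀ = 1 | D = 1, X = x) > 0 and well-definedness of conditionals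
    (hposY1 : ∀ x : ι, 0 < condP μ {ω | Y0 ω = 1} ({ω | D ω = 1} ∩ {ω | X ω = x}))
    (hposY0 : ∀ x : ι, 0 < condP μ {ω | Y0 ω = 1} ({ω | D ω = 0} ∩ {ω | X ω = x})) :
    (∑ x : ι, max 0
          ((condP μ {ω | T ω = 1} ({ω | D ω = 1} ∩ {ω | X ω = x}) +
              condP μ {ω | Y0 ω = 1} ({ω | D ω = 0} ∩ {ω | X ω = x}) - 1) /
            condP μ {ω | Y0 ω = 1} ({ω | D ω = 0} ∩ {ω | X ω = x})) *
        condP μ {ω | X ω = x} ({ω | Y0 ω = 1} ∩ {ω | D ω = 0})) ≤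
      condP μ {ω | T ω = 1} ({ω | Y0 ω = 1} ∩ {ω | D ω = 1}) := by
  have hY : MeasurableSet {ω | Y0 ω = 1} := hY0m (measurableSet_singleton 1)
  have hrisk : ∀ x j, 0 < condP μ {ω | Y0 ω = 1} ({ω | D ω = j} ∩ {ω | X ω = x}) →
      condP μ {ω | Y0 ω = 1} ({ω | D ω = j} ∩ {ω | X ω = x}) =
        condP μ {ω | Y0 ω = 1} {ω | X ω = x} := fun x j h =>
    condP_inter_eq_of_indep (hSBR x 1 j)
      fun h0 => measure_inter_ne_zero_of_condP_pos h (measure_mono_null inter_subset_right h0)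
  have hcov : ∀ x j, 0 < condP μ {ω | Y0 ω = 1} ({ω | D ω = j} ∩ {ω | X ω = x}) →
      condP μ {ω | X ω = x} ({ω | Y0 ω = 1} ∩ {ω | D ω = j}) =
        condP μ {ω | X ω = x} {ω | Y0 ω = 1} := fun x j h => by
    rw [inter_comm {ω | Y0 ω = 1}]
    refine condP_inter_eq_of_indep (hCS x j) fun h0 => measure_inter_ne_zero_of_condP_pos h
      (measure_mono_null ?_ h0)
    exact fun ω hω => ⟨hω.2.1, hω.1⟩
  calc _ ≤ ∑ x, condP μ ({ω | T ω = 1} ∩ {ω | X ω = x}) ({ω | Y0 ω = 1} ∩ {ω | D ω = 1}) :=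
        Finset.sum_le_sum fun x _ => frechet_bound_mul_condP_le hY
          (by rw [hrisk x 0 (hposY0 x), hrisk x 1 (hposY1 x)])
          (by rw [hcov x 0 (hposY0 x), hcov x 1 (hposY1 x)])
    _ = _ := sum_condP_inter_fiber X hXm _ _

/-- Lower bound under arbitrary unmeasured confounding:
`P(T=1 | Y₀=1, D=1) ≥ E[max{0, (P(T=1|D=1,X) + P(Y₀=1|D=0,X) − 1)/P(Y₀=1|D=0,X)} | Y₀=1, D=0]`. -/
theorem partial_identification_lower_bound
    {Ω ι : Type*} [MeasurableSpace Ω] [Fintype ι]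
    (μ : Measure Ω) [IsProbabilityMeasure μ]
    (T Y0 D : Ω → ℕ) (X : Ω → ι)
    (hTm : Measurable T) (hY0m : Measurable Y0) (hDm : Measurable D)
    (hXm : ∀ x : ι, MeasurableSet {ω | X ω = x})
    (hTbin : ∀ ω, T ω = 0 ∨ T ω = 1)
    (hY0bin : ∀ ω, Y0 ω = 0 ∨ Y0 ω = 1)
    (hDbin : ∀ ω, D ω = 0 ∨ D ω = 1)
    -- stable baseline risk: Y₀ ⫫ D | X
    (hSBR : ∀ (x : ι) (i j : ℕ),
      condP μ ({ω | Y0 ω = i} ∩ {ω | D ω = j}) {ω | X ω = x} =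
        condP μ {ω | Y0 ω = i} {ω | X ω = x} * condP μ {ω | D ω = j} {ω | X ω = x})
    -- covariate stability: X ⫫ D | Y₀ = 1
    (hCS : ∀ (x : ι) (j : ℕ),
      condP μ ({ω | X ω = x} ∩ {ω | D ω = j}) {ω | Y0 ω = 1} =
        condP μ {ω | X ω = x} {ω | Y0 ω = 1} * condP μ {ω | D ω = j} {ω | Y0 ω = 1})
    -- positivity: P(Y₀ = 1 | D = 1, X = x) > 0 and well-definedness of conditionals
    (hposY1 : ∀ x : ι, 0 < condP μ {ω | Y0 ω = 1} ({ω | D ω = 1} ∩ {ω | X ω = x}))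
    (hposY0 : ∀ x : ι, 0 < condP μ {ω | Y0 ω = 1} ({ω | D ω = 0} ∩ {ω | X ω = x}))
    (hpos1 : 0 < μ ({ω | Y0 ω = 1} ∩ {ω | D ω = 1}))
    (hpos0 : 0 < μ ({ω | Y0 ω = 1} ∩ {ω | D ω = 0}))
    (hposY : 0 < μ {ω | Y0 ω = 1})
    (hposx1 : ∀ x : ι, 0 < μ ({ω | D ω = 1} ∩ {ω | X ω = x}))
    (hposx0 : ∀ x : ι, 0 < μ ({ω | D ω = 0} ∩ {ω | X ω = x}))
    (hposx : ∀ x : ι, 0 < μ {ω | X ω = x}) :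
    (∑ x : ι, max 0
          ((condP μ {ω | T ω = 1} ({ω | D ω = 1} ∩ {ω | X ω = x}) +
              condP μ {ω | Y0 ω = 1} ({ω | D ω = 0} ∩ {ω | X ω = x}) - 1) /
            condP μ {ω | Y0 ω = 1} ({ω | D ω = 0} ∩ {ω | X ω = x})) *
        condP μ {ω | X ω = x} ({ω | Y0 ω = 1} ∩ {ω | D ω = 0})) ≤
      condP μ {ω | T ω = 1} ({ω | Y0 ω = 1} ∩ {ω | D ω = 1}) :=
  partial_identification_lower_bound_general μ T Y0 D X hY0m hXm hSBR hCS hposY1 hposY0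
end
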